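/- Let m ≥ 1 and K a field of characteristic 0. Any subalgebra of UT2(G) generated by at most 2m+1 elements satisfies the identity [x1,x2][x3,x4]⋯[x_{4m+3},x_{4m+4}] = 0 (the product of any 2m+2 commutators of its elements vanishes). -/

import Mathlib

/-! In the Grassmann algebra even elements are central, and odd elements anticommute and square
to zero. Write each generator as `gᵢ = eᵢ + oᵢ` with `eᵢ` even and `oᵢ` odd. Every element of the
subalgebra they generate is a sum of terms `u * o_{i₁} ⋯ o_{iₗ}` with `u` even; as `u` is central,
the commutator of two such elements only involves terms with `l ≥ 1` in both entries, so it has at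
least two odd factors, and a product of `k` commutators at least `2k`. With `n` generators, a
product of more than `n` of the `oᵢ` repeats one of them and vanishes.

In `UT₂(G)` the diagonal entries of a product are the products of the diagonal entries, and
those of the generators generate subalgebras of `G` with `2m + 1` generators. So each half of a
product of `2m + 2` commutators, having `m + 1` factors, is strictly upper triangular, and the
product of two strictly upper triangular `2 × 2` matrices is zero. -/

def br {R : Type*} [Ring R] (a b : R) : R := a * b - b * a

open CliffordAlgebra

theorem CliffordAlgebra.exists_even_add_odd {R M : Type*} [CommRing R] [AddCommGroup M]
    [Module R M] {Q : QuadraticForm R M} (x : CliffordAlgebra Q) :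
    ∃ e ∈ evenOdd Q 0, ∃ o ∈ evenOdd Q 1, e + o = x :=
  Submodule.mem_sup.mp ((evenOdd_isCompl Q).sup_eq_top ▸ Submodule.mem_top)

namespace ExteriorAlgebra

variable {R M : Type*} [CommRing R] [AddCommGroup M] [Module R M]

local notation "Q₀" => (0 : QuadraticForm R M)

theorem ι_mul_eq_involute_mul (v : M) (y : ExteriorAlgebra R M) :
    ι R v * y = involute y * ι R v := by
  induction y using CliffordAlgebra.induction with
  | algebraMap r => rw [AlgHom.commutes, Algebra.commutes]
  | ι w => rw [involute_ι, neg_mul, eq_neg_iff_add_eq_zero, ι_add_mul_swap]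
  | mul a b ha hb => rw [← mul_assoc, ha, mul_assoc, hb, map_mul, mul_assoc]
  | add a b ha hb => rw [mul_add, ha, hb, map_add, add_mul]

theorem commute_of_mem_evenOdd_zero {x : ExteriorAlgebra R M} (hx : x ∈ evenOdd Q₀ 0)
    (y : ExteriorAlgebra R M) : Commute x y := by
  induction x, hx using even_induction with
  | algebraMap r => exact Algebra.commute_algebraMap_left r y
  | add a b _ _ ha hb => exact ha.add_left hb
  | ι_mul_ι_mul m₁ m₂ t _ ht =>
    refine Commute.mul_left ?_ ht
    change _ = _
    rw [mul_assoc, ι_mul_eq_involute_mul m₂ y, ← mul_assoc, ι_mul_eq_involute_mul m₁,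
      involute_involute, mul_assoc]

theorem mul_eq_involute_mul_of_mem_evenOdd_one {x : ExteriorAlgebra R M}
    (hx : x ∈ evenOdd Q₀ 1) (y : ExteriorAlgebra R M) : x * y = involute y * x := by
  induction x, hx using odd_induction with
  | ι v => exact ι_mul_eq_involute_mul v y
  | add a b _ _ ha hb => rw [add_mul, ha, hb, mul_add]
  | ι_mul_ι_mul m₁ m₂ t _ ht =>
    rw [mul_assoc, ht, ← mul_assoc,
      (commute_of_mem_evenOdd_zero (ι_mul_ι_mem_evenOdd_zero Q₀ m₁ m₂) _).eq, mul_assoc]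

theorem mul_eq_neg_mul_of_mem_evenOdd_one {x y : ExteriorAlgebra R M}
    (hx : x ∈ evenOdd Q₀ 1) (hy : y ∈ evenOdd Q₀ 1) : x * y = -(y * x) := by
  rw [mul_eq_involute_mul_of_mem_evenOdd_one hx, involute_eq_of_mem_odd hy, neg_mul]

theorem mul_self_eq_zero_of_mem_evenOdd_one {x : ExteriorAlgebra R M}
    (hx : x ∈ evenOdd Q₀ 1) : x * x = 0 := by
  induction x, hx using odd_induction with
  | ι v => exact ι_sq_zero v
  | add a b ha hb iha ihb =>
    rw [add_mul, mul_add, mul_add, iha, ihb, mul_eq_neg_mul_of_mem_evenOdd_one ha hb,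
      zero_add, add_zero, neg_add_cancel]
  | ι_mul_ι_mul m₁ m₂ t _ ht =>
    rw [(commute_of_mem_evenOdd_zero (ι_mul_ι_mem_evenOdd_zero Q₀ m₁ m₂) t).symm.mul_mul_mul_comm,
      ht, mul_zero]

theorem mul_list_prod_eq_zero_of_mem {x : ExteriorAlgebra R M} {L : List (ExteriorAlgebra R M)}
    (hL : ∀ y ∈ L, y ∈ evenOdd Q₀ 1) (hx : x ∈ L) : x * L.prod = 0 := by
  induction L with
  | nil => simp at hx
  | cons y L ih =>
    have hxodd := hL x hx
    rw [List.prod_cons, ← mul_assoc]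
    rcases List.mem_cons.mp hx with rfl | hx
    · rw [mul_self_eq_zero_of_mem_evenOdd_one hxodd, zero_mul]
    · rw [mul_eq_neg_mul_of_mem_evenOdd_one hxodd (hL y List.mem_cons_self), neg_mul,
        mul_assoc, ih (fun z hz => hL z (List.mem_cons_of_mem y hz)) hx, mul_zero, neg_zero]

theorem list_prod_eq_zero_of_not_nodup {L : List (ExteriorAlgebra R M)}
    (hL : ∀ y ∈ L, y ∈ evenOdd Q₀ 1) (hdup : ¬ L.Nodup) : L.prod = 0 := by
  induction L with
  | nil => exact absurd List.nodup_nil hdup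
  | cons x L ih =>
    rw [List.prod_cons]
    by_cases hx : x ∈ L
    · exact mul_list_prod_eq_zero_of_mem (fun y hy => hL y (List.mem_cons_of_mem x hy)) hx
    · rw [ih (fun y hy => hL y (List.mem_cons_of_mem x hy))
        (fun h => hdup (List.nodup_cons.mpr ⟨hx, h⟩)), mul_zero]

variable {ι : Type*} (o : ι → ExteriorAlgebra R M)

def oddFiltration (k : ℕ) : Submodule R (ExteriorAlgebra R M) :=
  Submodule.span R {x | ∃ u ∈ evenOdd Q₀ 0, ∃ l : List ι, k ≤ l.length ∧ u * (l.map o).prod = x}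

theorem mul_list_prod_mem_oddFiltration {u : ExteriorAlgebra R M} (hu : u ∈ evenOdd Q₀ 0)
    {l : List ι} {k : ℕ} (hk : k ≤ l.length) : u * (l.map o).prod ∈ oddFiltration o k :=
  Submodule.subset_span ⟨u, hu, l, hk, rfl⟩

theorem oddFiltration_mul_le (j k : ℕ) :
    oddFiltration o j * oddFiltration o k ≤ oddFiltration o (j + k) := by
  rw [oddFiltration, oddFiltration, Submodule.span_mul_span, Submodule.span_le]
  rintro _ ⟨_, ⟨u, hu, l, hl, rfl⟩, _, ⟨u', hu', l', hl', rfl⟩, rfl⟩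
  have hmul : u * (l.map o).prod * (u' * (l'.map o).prod) = u * u' * ((l ++ l').map o).prod := by
    rw [List.map_append, List.prod_append,
      (commute_of_mem_evenOdd_zero hu' _).symm.mul_mul_mul_comm]
  show _ * _ ∈ oddFiltration o (j + k)
  rw [hmul]
  exact mul_list_prod_mem_oddFiltration o (by simpa using SetLike.mul_mem_graded hu hu')
    (by rw [List.length_append]; omega)

instance : SetLike.GradedMonoid (oddFiltration o) where
  one_mem := by
    simpa using mul_list_prod_mem_oddFiltration o (SetLike.one_mem_graded (evenOdd Q₀)) (l := [])
      le_rfl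
  mul_mem _ _ _ _ hx hy := oddFiltration_mul_le o _ _ (Submodule.mul_mem_mul hx hy)

theorem oddFiltration_zero_le_sup : oddFiltration o 0 ≤ evenOdd Q₀ 0 ⊔ oddFiltration o 1 := by
  rw [oddFiltration, Submodule.span_le]
  rintro _ ⟨u, hu, l, -, rfl⟩
  rcases l with _ | ⟨i, l⟩
  · simpa using Submodule.mem_sup_left hu
  · exact Submodule.mem_sup_right (mul_list_prod_mem_oddFiltration o hu (by simp))

theorem mem_oddFiltration_zero_of_mem_adjoin {g : ι → ExteriorAlgebra R M}
    (hg : ∀ i, g i - o i ∈ evenOdd Q₀ 0) {x : ExteriorAlgebra R M}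
    (hx : x ∈ Algebra.adjoin R (Set.range g)) : x ∈ oddFiltration o 0 := by
  let F := (oddFiltration o 0).toSubalgebra (SetLike.one_mem_graded _)
    fun _ _ hx hy => by simpa using SetLike.mul_mem_graded hx hy
  refine Algebra.adjoin_le (S := F) (Set.range_subset_iff.2 fun i => ?_) hx
  show g i ∈ oddFiltration o 0
  have h := add_mem (mul_list_prod_mem_oddFiltration o (hg i) (l := []) le_rfl)
    (mul_list_prod_mem_oddFiltration o (SetLike.one_mem_graded (evenOdd Q₀)) (l := [i])
      (Nat.zero_le _))
  simpa using h

theorem br_mem_oddFiltration_two {x y : ExteriorAlgebra R M} (hx : x ∈ oddFiltration o 0)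
    (hy : y ∈ oddFiltration o 0) : br x y ∈ oddFiltration o 2 := by
  obtain ⟨e, he, x', hx', rfl⟩ := Submodule.mem_sup.mp (oddFiltration_zero_le_sup o hx)
  obtain ⟨f, hf, y', hy', rfl⟩ := Submodule.mem_sup.mp (oddFiltration_zero_le_sup o hy)
  have hbr : br (e + x') (f + y') = x' * y' - y' * x' := by
    have h₁ := (commute_of_mem_evenOdd_zero he f).eq
    have h₂ := (commute_of_mem_evenOdd_zero he y').eq
    have h₃ := (commute_of_mem_evenOdd_zero hf x').eq
    simp only [br, add_mul, mul_add]
    rw [h₁, h₂, h₃]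
    abel
  rw [hbr]
  exact sub_mem (oddFiltration_mul_le o 1 1 (Submodule.mul_mem_mul hx' hy'))
    (oddFiltration_mul_le o 1 1 (Submodule.mul_mem_mul hy' hx'))

theorem oddFiltration_eq_bot [Fintype ι] (ho : ∀ i, o i ∈ evenOdd Q₀ 1) {k : ℕ}
    (hk : Fintype.card ι < k) : oddFiltration o k = ⊥ := by
  rw [eq_bot_iff, oddFiltration, Submodule.span_le]
  rintro _ ⟨u, -, l, hl, rfl⟩
  have hdup : ¬ (l.map o).Nodup := fun h => by
    have := h.of_map.length_le_card
    omega
  rw [SetLike.mem_coe, list_prod_eq_zero_of_not_nodup (by simpa using fun i _ => ho i) hdup,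
    mul_zero]
  exact Submodule.zero_mem _

theorem list_prod_eq_zero_of_mem_image2_br [Fintype ι] (g : ι → ExteriorAlgebra R M)
    {L : List (ExteriorAlgebra R M)}
    (hL : ∀ x ∈ L, x ∈ Set.image2 br (Algebra.adjoin R (Set.range g) : Set _)
      (Algebra.adjoin R (Set.range g)))
    (hlen : Fintype.card ι < 2 * L.length) : L.prod = 0 := by
  choose e he o ho hgo using fun i => exists_even_add_odd (g i)
  have hadj : ∀ x ∈ Algebra.adjoin R (Set.range g), x ∈ oddFiltration o 0 :=
    fun x => mem_oddFiltration_zero_of_mem_adjoin o fun i => by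
      rw [← hgo i, add_sub_cancel_right]; exact he i
  have hbr : ∀ x ∈ L, x ∈ oddFiltration o 2 := by
    intro x hx
    obtain ⟨s, hs, t, ht, rfl⟩ := hL x hx
    exact br_mem_oddFiltration_two o (hadj s hs) (hadj t ht)
  have hprod := SetLike.list_prod_map_mem_graded L (fun _ => 2) id hbr
  rw [List.map_id, oddFiltration_eq_bot o ho (by simpa [mul_comm] using hlen)] at hprod
  exact (Submodule.mem_bot R).mp hprod

end ExteriorAlgebra

namespace Matrix

variable {n A : Type*} [LinearOrder n] [Fintype n] [Ring A]

theorem IsUpperTriangular.mul_apply_self {X Y : Matrix n n A} (hX : X.IsUpperTriangular)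
    (hY : Y.IsUpperTriangular) (i : n) : (X * Y) i i = X i i * Y i i := by
  rw [mul_apply]
  refine Finset.sum_eq_single i (fun k _ hki => ?_) (by simp)
  rcases hki.lt_or_gt with h | h
  · rw [hX h, zero_mul]
  · rw [hY h, mul_zero]

theorem IsUpperTriangular.br {X Y : Matrix n n A} (hX : X.IsUpperTriangular)
    (hY : Y.IsUpperTriangular) : (_root_.br X Y).IsUpperTriangular :=
  (hX.mul hY).sub (hY.mul hX)

theorem IsUpperTriangular.br_apply_self {X Y : Matrix n n A} (hX : X.IsUpperTriangular)
    (hY : Y.IsUpperTriangular) (i : n) : _root_.br X Y i i = _root_.br (X i i) (Y i i) := by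
  rw [_root_.br, sub_apply, hX.mul_apply_self hY, hY.mul_apply_self hX, _root_.br]

theorem isUpperTriangular_list_prod {L : List (Matrix n n A)}
    (hL : ∀ X ∈ L, X.IsUpperTriangular) : L.prod.IsUpperTriangular :=
  list_prod_mem (S := blockTriangularSubsemiring A id) hL

theorem list_prod_apply_self_of_isUpperTriangular {L : List (Matrix n n A)}
    (hL : ∀ X ∈ L, X.IsUpperTriangular) (i : n) : L.prod i i = (L.map (· i i)).prod := by
  induction L with
  | nil => simp
  | cons X L ih =>
    have hL' : ∀ Y ∈ L, Y.IsUpperTriangular := fun Y hY => hL Y (List.mem_cons_of_mem X hY)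
    rw [List.prod_cons, (hL X List.mem_cons_self).mul_apply_self
      (isUpperTriangular_list_prod hL'), ih hL', List.map_cons, List.prod_cons]

variable {R ι : Type*} [CommRing R] [Algebra R A] {ξ : ι → Matrix n n A}

theorem isUpperTriangular_of_mem_adjoin (hξ : ∀ j, (ξ j).IsUpperTriangular) {X : Matrix n n A}
    (hX : X ∈ Algebra.adjoin R (Set.range ξ)) : X.IsUpperTriangular :=
  Algebra.adjoin_le (S := blockTriangularSubalgebra R A id) (Set.range_subset_iff.2 hξ) hX

theorem isUpperTriangular_of_mem_image2_br (hξ : ∀ j, (ξ j).IsUpperTriangular)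
    {X : Matrix n n A} (hX : X ∈ Set.image2 _root_.br (Algebra.adjoin R (Set.range ξ) : Set _)
      (Algebra.adjoin R (Set.range ξ))) : X.IsUpperTriangular := by
  obtain ⟨s, hs, t, ht, rfl⟩ := hX
  exact (isUpperTriangular_of_mem_adjoin hξ hs).br (isUpperTriangular_of_mem_adjoin hξ ht)

theorem apply_self_mem_adjoin (hξ : ∀ j, (ξ j).IsUpperTriangular) {X : Matrix n n A}
    (hX : X ∈ Algebra.adjoin R (Set.range ξ)) (i : n) :
    X i i ∈ Algebra.adjoin R (Set.range fun j => ξ j i i) := by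
  induction hX using Algebra.adjoin_induction with
  | mem X hX =>
    obtain ⟨j, rfl⟩ := hX
    exact Algebra.subset_adjoin ⟨j, rfl⟩
  | algebraMap r => simp [algebraMap_matrix_apply]
  | add X Y _ _ hX hY => exact add_mem hX hY
  | mul X Y hX' hY' hX hY =>
    rw [(isUpperTriangular_of_mem_adjoin hξ hX').mul_apply_self
      (isUpperTriangular_of_mem_adjoin hξ hY')]
    exact mul_mem hX hY

theorem mul_eq_zero_of_isUpperTriangular_of_apply_self_eq_zero
    {X Y : Matrix (Fin 2) (Fin 2) A} (hX : X.IsUpperTriangular) (hX' : ∀ i, X i i = 0)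
    (hY : Y.IsUpperTriangular) (hY' : ∀ i, Y i i = 0) : X * Y = 0 := by
  have hX₁₀ : X 1 0 = 0 := hX Fin.zero_lt_one
  have hY₁₀ : Y 1 0 = 0 := hY Fin.zero_lt_one
  ext i j
  fin_cases i <;> fin_cases j <;> simp [mul_apply, Fin.sum_univ_two, hX₁₀, hY₁₀, hX', hY']

theorem isUpperTriangular_of_apply_one_zero {α : Type*} [Zero α] {X : Matrix (Fin 2) (Fin 2) α}
    (h : X 1 0 = 0) : X.IsUpperTriangular := by
  intro i j hij
  fin_cases i <;> fin_cases j <;> first | exact h | simp at hij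

end Matrix

theorem Matrix.list_prod_apply_self_eq_zero_of_mem_image2_br {R M ι n : Type*} [CommRing R]
    [AddCommGroup M] [Module R M] [Fintype ι] [LinearOrder n] [Fintype n]
    {ξ : ι → Matrix n n (ExteriorAlgebra R M)} (hξ : ∀ j, (ξ j).IsUpperTriangular)
    {L : List (Matrix n n (ExteriorAlgebra R M))}
    (hL : ∀ X ∈ L, X ∈ Set.image2 br (Algebra.adjoin R (Set.range ξ) : Set _)
      (Algebra.adjoin R (Set.range ξ)))
    (hlen : Fintype.card ι < 2 * L.length) (i : n) : L.prod i i = 0 := by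
  rw [list_prod_apply_self_of_isUpperTriangular fun X hX =>
    isUpperTriangular_of_mem_image2_br hξ (hL X hX)]
  refine ExteriorAlgebra.list_prod_eq_zero_of_mem_image2_br (fun j => ξ j i i) ?_
    (by simpa using hlen)
  simp only [List.mem_map]
  rintro _ ⟨X, hX, rfl⟩
  obtain ⟨s, hs, t, ht, rfl⟩ := hL X hX
  exact ⟨_, apply_self_mem_adjoin hξ hs i, _, apply_self_mem_adjoin hξ ht i,
    ((isUpperTriangular_of_mem_adjoin hξ hs).br_apply_self
      (isUpperTriangular_of_mem_adjoin hξ ht) i).symm⟩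

theorem Matrix.list_prod_eq_zero_of_mem_image2_br {R M ι : Type*} [CommRing R]
    [AddCommGroup M] [Module R M] [Fintype ι]
    {ξ : ι → Matrix (Fin 2) (Fin 2) (ExteriorAlgebra R M)} (hξ : ∀ j, (ξ j).IsUpperTriangular)
    {L : List (Matrix (Fin 2) (Fin 2) (ExteriorAlgebra R M))}
    (hL : ∀ X ∈ L, X ∈ Set.image2 br (Algebra.adjoin R (Set.range ξ) : Set _)
      (Algebra.adjoin R (Set.range ξ)))
    {k : ℕ} (hk : Fintype.card ι < 2 * k) (hlen : 2 * k ≤ L.length) : L.prod = 0 := by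
  have htake : ∀ X ∈ L.take k, _ := fun X hX => hL X (List.mem_of_mem_take hX)
  have hdrop : ∀ X ∈ L.drop k, _ := fun X hX => hL X (List.mem_of_mem_drop hX)
  rw [← L.take_append_drop k, List.prod_append]
  exact mul_eq_zero_of_isUpperTriangular_of_apply_self_eq_zero
    (isUpperTriangular_list_prod fun X hX => isUpperTriangular_of_mem_image2_br hξ (htake X hX))
    (list_prod_apply_self_eq_zero_of_mem_image2_br hξ htake (by simp; omega))
    (isUpperTriangular_list_prod fun X hX => isUpperTriangular_of_mem_image2_br hξ (hdrop X hX))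
    (list_prod_apply_self_eq_zero_of_mem_image2_br hξ hdrop (by simp; omega))

theorem stmt17_general {K V : Type*} [Field K] [AddCommGroup V] [Module K V]
    (m : ℕ)
    (ξ : Fin (2 * m + 1) → Matrix (Fin 2) (Fin 2) (ExteriorAlgebra K V))
    (hξ : ∀ i, ξ i 1 0 = 0)
    (a : ℕ → Matrix (Fin 2) (Fin 2) (ExteriorAlgebra K V))
    (ha : ∀ i, a i ∈ Algebra.adjoin K (Set.range ξ)) :
    (List.ofFn (fun i : Fin (2 * m + 2) => br (a (2 * i)) (a (2 * i + 1)))).prod = 0 := by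
  refine Matrix.list_prod_eq_zero_of_mem_image2_br
    (fun j => Matrix.isUpperTriangular_of_apply_one_zero (hξ j)) ?_ (k := m + 1)
    (by simp; omega) (by simp; omega)
  simp only [List.mem_ofFn]
  rintro _ ⟨i, rfl⟩
  exact ⟨_, ha _, _, ha _, rfl⟩

/-- Let `G` be the Grassmann algebra of an infinite-dimensional vector space over a field of
characteristic zero and `m ≥ 1`.  Any subalgebra of `UT2(G)` generated by at most `2m+1`
elements satisfies `[x1,x2][x3,x4]⋯[x_{4m+3},x_{4m+4}] = 0`: every product of `2m+2`
commutators of its elements vanishes. -/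
theorem stmt17 {K V : Type*} [Field K] [CharZero K] [AddCommGroup V] [Module K V]
    (hV : ¬ Module.Finite K V) (m : ℕ) (hm : 1 ≤ m)
    (ξ : Fin (2 * m + 1) → Matrix (Fin 2) (Fin 2) (ExteriorAlgebra K V))
    (hξ : ∀ i, ξ i 1 0 = 0)
    (a : ℕ → Matrix (Fin 2) (Fin 2) (ExteriorAlgebra K V))
    (ha : ∀ i, a i ∈ Algebra.adjoin K (Set.range ξ)) :
    (List.ofFn (fun i : Fin (2 * m + 2) => br (a (2 * i)) (a (2 * i + 1)))).prod = 0 :=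
  stmt17_general m ξ hξ a ha
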